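/- Let A be a K-tuple of polytopes and let m = min_{J⊆K} dim(AJ). If dim(AI) = m and dim(AJ) = m for I, J ⊆ K, then dim(A(I∩J)) = m. Consequently there exists a unique minimal subset I₀ ⊆ K with dim(AI₀) = m. -/

import Mathlib

/-!
The direction of a Minkowski sum of nonempty sets is the join of their directions, so
`J ↦ dim (∑_{j ∈ J} A j)` is the rank function of a join of subspaces and hence submodular, by
the modular law `dim (U ⊔ W) + dim (U ⊓ W) = dim U + dim W`. Subtracting the modular `|J|` keeps
`dim AJ` submodular. The minimizers of a submodular function are closed under `∩`, and a finite
nonempty `∩`-closed family of sets has a least element.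
-/

open Pointwise MeasureTheory Metric

noncomputable section

/-- Ambient Euclidean space `ℝⁿ`. -/
abbrev V (n : ℕ) : Type := EuclideanSpace ℝ (Fin n)

/-- Dimension of (the affine span of) a subset of `ℝⁿ`. -/
def affDim {n : ℕ} (s : Set (V n)) : ℕ := Module.finrank ℝ (vectorSpan ℝ s)

/-- A (compact convex) polytope: the convex hull of a nonempty finite set. -/
def IsPolytope {n : ℕ} (P : Set (V n)) : Prop :=
  ∃ F : Finset (V n), F.Nonempty ∧ P = convexHull ℝ (F : Set (V n))

/-- `dim AJ = dim (∑_{j ∈ J} A j) − |J|` for a tuple of polytopes; the empty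
Minkowski sum is `{0}` (the `0` of the pointwise monoid on sets). -/
def tdim {n : ℕ} {K : Type} [Fintype K] (A : K → Set (V n)) (J : Finset K) : ℤ :=
  (affDim (∑ j ∈ J, A j) : ℤ) - J.card

section Order

variable {α : Type*}

lemma infClosed_setOf_eq_of_isLeast_range {β : Type*} [Lattice α] [AddCommMonoid β]
    [LinearOrder β] [IsOrderedCancelAddMonoid β] {f : α → β}
    (hf : ∀ a b, f (a ⊔ b) + f (a ⊓ b) ≤ f a + f b) {m : β} (hm : IsLeast (Set.range f) m) :
    InfClosed {a | f a = m} := by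
  intro a (ha : f a = m) b (hb : f b = m)
  refine le_antisymm (not_lt.mp fun hlt => ?_) (hm.2 ⟨_, rfl⟩)
  have hsup : m ≤ f (a ⊔ b) := hm.2 ⟨_, rfl⟩
  have := hf a b
  rw [ha, hb] at this
  exact (add_lt_add_of_le_of_lt hsup hlt).not_ge this

lemma InfClosed.exists_isLeast_of_finite [SemilatticeInf α] {s : Set α} (hs : InfClosed s)
    (hfin : s.Finite) (hne : s.Nonempty) : ∃ a, IsLeast s a :=
  ⟨hfin.toFinset.inf' (by simpa using hne) id,
    hs.finsetInf'_mem _ fun _ h => hfin.mem_toFinset.mp h,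
    fun _ h => Finset.inf'_le id (hfin.mem_toFinset.mpr h)⟩

end Order

section VectorSpan

variable {k M : Type*} [Ring k] [AddCommGroup M] [Module k M]

lemma vectorSpan_add {s t : Set M} (hs : s.Nonempty) (ht : t.Nonempty) :
    vectorSpan k (s + t) = vectorSpan k s ⊔ vectorSpan k t := by
  have vectorSpan_right_le : ∀ {s t : Set M}, s.Nonempty →
      vectorSpan k t ≤ vectorSpan k (s + t) := by
    rintro s t ⟨a, ha⟩
    rw [← vectorSpan_vadd k t a]
    exact vectorSpan_mono k (Set.vadd_set_subset_add ha)
  refine le_antisymm ?_ (sup_le ?_ (vectorSpan_right_le hs))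
  · rw [vectorSpan_def, Submodule.span_le]
    rintro _ ⟨_, ⟨a, ha, c, hc, rfl⟩, _, ⟨b, hb, d, hd, rfl⟩, rfl⟩
    change a + c - (b + d) ∈ _
    rw [add_sub_add_comm]
    exact Submodule.add_mem_sup (vsub_mem_vectorSpan k ha hb) (vsub_mem_vectorSpan k hc hd)
  · rw [add_comm]
    exact vectorSpan_right_le ht

lemma vectorSpan_finset_sum {ι : Type*} [DecidableEq ι] {A : ι → Set M}
    (hA : ∀ i, (A i).Nonempty) (J : Finset ι) :
    vectorSpan k (∑ j ∈ J, A j) = J.sup (fun j => vectorSpan k (A j)) := by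
  induction J using Finset.induction_on with
  | empty =>
    rw [Finset.sum_empty, Finset.sup_empty]
    exact vectorSpan_singleton k (0 : M)
  | insert i J hi ih =>
    have hne : (∑ j ∈ J, A j).Nonempty :=
      Finset.sum_induction _ Set.Nonempty (fun _ _ => .add) ⟨0, rfl⟩ fun j _ => hA j
    rw [Finset.sum_insert hi, vectorSpan_add (hA i) hne, Finset.sup_insert, ih]

end VectorSpan

lemma finrank_finsetSup_union_add_inter_le {k M : Type*} [DivisionRing k] [AddCommGroup M]
    [Module k M] [FiniteDimensional k M] {ι : Type*} [DecidableEq ι] (W : ι → Submodule k M)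
    (I J : Finset ι) :
    Module.finrank k ↥((I ∪ J).sup W) + Module.finrank k ↥((I ∩ J).sup W) ≤
      Module.finrank k ↥(I.sup W) + Module.finrank k ↥(J.sup W) := by
  have hinter : (I ∩ J).sup W ≤ I.sup W ⊓ J.sup W :=
    le_inf (Finset.sup_mono Finset.inter_subset_left) (Finset.sup_mono Finset.inter_subset_right)
  rw [Finset.sup_union, ← Submodule.finrank_sup_add_finrank_inf_eq (I.sup W) (J.sup W)]
  exact Nat.add_le_add_left (Submodule.finrank_mono hinter) _

lemma IsPolytope.nonempty {n : ℕ} {P : Set (V n)} (hP : IsPolytope P) : P.Nonempty := by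
  obtain ⟨F, ⟨x, hx⟩, rfl⟩ := hP
  exact ⟨x, subset_convexHull ℝ _ hx⟩

lemma tdim_eq_finrank_sup_sub_card {n : ℕ} {K : Type} [Fintype K] [DecidableEq K]
    {A : K → Set (V n)} (hA : ∀ k, (A k).Nonempty) (J : Finset K) :
    tdim A J = (Module.finrank ℝ ↥(J.sup fun j => vectorSpan ℝ (A j)) : ℤ) - J.card := by
  rw [tdim, affDim, vectorSpan_finset_sum hA]

lemma tdim_union_add_tdim_inter_le {n : ℕ} {K : Type} [Fintype K] [DecidableEq K]
    {A : K → Set (V n)} (hA : ∀ k, (A k).Nonempty) (I J : Finset K) :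
    tdim A (I ∪ J) + tdim A (I ∩ J) ≤ tdim A I + tdim A J := by
  have hcard := Finset.card_union_add_card_inter I J
  have hrank := finrank_finsetSup_union_add_inter_le (fun j => vectorSpan ℝ (A j)) I J
  simp only [tdim_eq_finrank_sup_sub_card hA]
  omega

/-- If the minimum `m` of `J ↦ dim AJ` is attained at `I` and at `J` then it is
attained at `I ∩ J`; consequently there is a unique minimal subset attaining it. -/
theorem stmt1 {n : ℕ} {K : Type} [Fintype K] [DecidableEq K]
    (A : K → Set (V n)) (hA : ∀ k, IsPolytope (A k))
    (m : ℤ) (hm : IsLeast (Set.range (tdim A)) m) :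
    (∀ I J : Finset K, tdim A I = m → tdim A J = m → tdim A (I ∩ J) = m) ∧
    ∃! I₀ : Finset K, tdim A I₀ = m ∧ ∀ J : Finset K, tdim A J = m → I₀ ⊆ J := by
  have hclosed : InfClosed {J | tdim A J = m} :=
    infClosed_setOf_eq_of_isLeast_range
      (tdim_union_add_tdim_inter_le fun k => (hA k).nonempty) hm
  obtain ⟨I₀, hI₀⟩ := hclosed.exists_isLeast_of_finite (Set.toFinite _) hm.1
  exact ⟨fun _ _ hI hJ => hclosed hI hJ, I₀, hI₀,
    fun _ hI => IsLeast.unique (s := {J | tdim A J = m}) hI hI₀⟩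

end
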